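/- There do not exist nonconstant polynomials f, g ∈ ℂ[X] with f^3 + g^3 = 1. -/

import Mathlib

open Polynomial

theorem Polynomial.natDegree_eq_zero_of_pow_add_pow_eq_one {k : Type*} [Field k] {n : ℕ}
    (hn : 3 ≤ n) (chn : (n : k) ≠ 0) {f g : k[X]} (hf : f ≠ 0) (hg : g ≠ 0)
    (h : f ^ n + g ^ n = 1) : f.natDegree = 0 ∧ g.natDegree = 0 := by
  have hn0 : 0 < n := by omega
  have hfg : IsCoprime f g :=
    (IsCoprime.pow_iff hn0 hn0).mp ⟨1, 1, by rw [one_mul, one_mul, h]⟩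
  obtain ⟨hf', hg', -⟩ := Polynomial.flt hn chn hf hg one_ne_zero hfg (by rw [h, one_pow])
  exact ⟨hf', hg'⟩

theorem stmt_17 :
    ¬ ∃ f g : Polynomial ℂ, 0 < f.degree ∧ 0 < g.degree ∧ f ^ 3 + g ^ 3 = 1 := by
  rintro ⟨f, g, hf, hg, h⟩
  have hf' := (natDegree_pos_iff_degree_pos.mpr hf).ne'
  exact hf' (natDegree_eq_zero_of_pow_add_pow_eq_one le_rfl three_ne_zero
    (ne_zero_of_degree_gt hf) (ne_zero_of_degree_gt hg) h).1
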